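/- With u the Dandelin–Gräffe polynomial of a monic degree-d polynomial p (u(y²) = (−1)^d p(y) p(−y)), for any y ∈ ℂ and any square root s of y with p(s) ≠ 0 and p(−s) ≠ 0: u'(y)/u(y) = (1/(2s))·( p'(s)/p(s) − p'(−s)/p(−s) ). -/

import Mathlib

/-! Since ℂ is infinite, the pointwise identity is the polynomial identity
u(X²) = c·p(X)·p(−X) with c = (−1)^d. Differentiating it at s gives
2s·u'(s²) = c·(p'(s)p(−s) − p(s)p'(−s)), and dividing by u(s²) = c·p(s)p(−s) gives the claim. -/

open Polynomial

namespace Polynomial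

section CommRing

variable {R : Type*} [CommRing R]

theorem eval_derivative_comp_X_sq (u : R[X]) (s : R) :
    (derivative (u.comp (X ^ 2))).eval s = 2 * s * (derivative u).eval (s ^ 2) := by
  simp only [derivative_comp, derivative_X_pow, eval_mul, eval_comp, eval_pow, eval_X,
    eval_C, Nat.cast_ofNat]
  ring

theorem eval_derivative_comp_neg_X (p : R[X]) (s : R) :
    (derivative (p.comp (-X))).eval s = -(derivative p).eval (-s) := by
  simp [derivative_comp]

theorem two_mul_eval_derivative_of_comp_X_sq_eq {u p : R[X]} {c : R}
    (hu : u.comp (X ^ 2) = C c * p * p.comp (-X)) (s : R) :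
    2 * s * (derivative u).eval (s ^ 2) =
      c * ((derivative p).eval s * p.eval (-s) - p.eval s * (derivative p).eval (-s)) := by
  have h := congrArg (fun q => (derivative q).eval s) hu
  simp only [eval_derivative_comp_X_sq, derivative_mul, derivative_C, eval_add, eval_mul,
    eval_C, eval_comp, eval_neg, eval_X, eval_derivative_comp_neg_X, zero_mul, zero_add] at h
  linear_combination h

end CommRing

theorem comp_X_sq_eq_of_forall_eval_sq {R : Type*} [CommRing R] [IsDomain R] [Infinite R]
    {u p : R[X]} {c : R} (hu : ∀ y, u.eval (y ^ 2) = c * p.eval y * p.eval (-y)) :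
    u.comp (X ^ 2) = C c * p * p.comp (-X) :=
  funext fun y => by simp [eval_comp, hu y]

theorem eval_derivative_div_eval_of_comp_X_sq_eq {K : Type*} [Field K] [CharZero K]
    {u p : K[X]} {c : K} (hc : c ≠ 0) (hu : u.comp (X ^ 2) = C c * p * p.comp (-X))
    {s : K} (hs : s ≠ 0) (hps : p.eval s ≠ 0) (hpns : p.eval (-s) ≠ 0) :
    (derivative u).eval (s ^ 2) / u.eval (s ^ 2) =
      1 / (2 * s) * ((derivative p).eval s / p.eval s -
        (derivative p).eval (-s) / p.eval (-s)) := by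
  have hus : u.eval (s ^ 2) = c * p.eval s * p.eval (-s) := by
    simpa [eval_comp] using congrArg (eval s) hu
  have hder := two_mul_eval_derivative_of_comp_X_sq_eq hu s
  rw [hus]
  field_simp
  linear_combination hder

end Polynomial

theorem dandelin_graeffe_newton_ratio_general (d : ℕ) (p u : Polynomial ℂ)
    (hu : ∀ y : ℂ, u.eval (y ^ 2) = (-1) ^ d * p.eval y * p.eval (-y))
    (s : ℂ) (hs : s ≠ 0) (hps : p.eval s ≠ 0) (hpns : p.eval (-s) ≠ 0) :
    (Polynomial.derivative u).eval (s ^ 2) / u.eval (s ^ 2) =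
      (1 / (2 * s)) *
        ((Polynomial.derivative p).eval s / p.eval s -
          (Polynomial.derivative p).eval (-s) / p.eval (-s)) :=
  eval_derivative_div_eval_of_comp_X_sq_eq (pow_ne_zero d (neg_ne_zero.mpr one_ne_zero))
    (comp_X_sq_eq_of_forall_eval_sq hu) hs hps hpns

theorem dandelin_graeffe_newton_ratio (d : ℕ) (p u : Polynomial ℂ)
    (hmonic : p.Monic) (hdeg : p.natDegree = d)
    (hu : ∀ y : ℂ, u.eval (y ^ 2) = (-1) ^ d * p.eval y * p.eval (-y))
    (s : ℂ) (hs : s ≠ 0) (hps : p.eval s ≠ 0) (hpns : p.eval (-s) ≠ 0) :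
    (Polynomial.derivative u).eval (s ^ 2) / u.eval (s ^ 2) =
      (1 / (2 * s)) *
        ((Polynomial.derivative p).eval s / p.eval s -
          (Polynomial.derivative p).eval (-s) / p.eval (-s)) :=
  dandelin_graeffe_newton_ratio_general d p u hu s hs hps hpns
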